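/- arXiv:2308.02836 — 5 statements merged into one kernel-verified Lean document; each statement's English description precedes it below -/
import Mathlib

section
/- Let A ∈ ℝ^{m×n} with m ≤ n, and let f: ℝᵐ → ℝⁿ be of the form f(y) = W₂·ReLU(W₁y) (componentwise ReLU) for matrices W₁ ∈ ℝ^{k×m}, W₂ ∈ ℝ^{n×k}. Let X ∈ ℝ^{n×ñ} have columns x₁,…,x_ñ, each of Euclidean norm 1, and U = ⋃_k span(x_k). Then sup over x ∈ U\{0} of ‖f(Ax) − x‖₂/‖x‖₂ is at least sqrt((1/ñ)·Σ_{k=m+1}^{ñ} σ_k(X)²), where σ_k(X) denotes the k-th largest singular value of X. -/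
/-- Euclidean norm of a vector in `Fin n → ℝ`. -/
noncomputable def euclidNorm {n : ℕ} (v : Fin n → ℝ) : ℝ :=
  Real.sqrt (∑ i, (v i) ^ 2)

/-- The ReLU function. -/
noncomputable def relu (x : ℝ) : ℝ := max x 0

/-- Euclidean singular values of a real matrix, in decreasing order. -/
noncomputable def singularValues {n p : ℕ} (X : Matrix (Fin n) (Fin p) ℝ) : Fin p → ℝ :=
  fun k =>
    Real.sqrt ((Matrix.isHermitian_conjTranspose_mul_self X).eigenvalues
      ((Tuple.sort ((Matrix.isHermitian_conjTranspose_mul_self X).eigenvalues)) k.rev))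

open Matrix

lemma card_filter_lt_fin (N q : ℕ) (hq : q ≤ N) :
    (Finset.univ.filter (fun i : Fin N => (i : ℕ) < q)).card = q := by
  rw [Finset.card_filter]
  rw [Fin.sum_univ_eq_sum_range (fun i => if i < q then 1 else 0)]
  rw [← Finset.card_filter]
  rw [show Finset.filter (fun i => i < q) (Finset.range N) = Finset.range q by
    ext x; simp; omega]
  exact Finset.card_range q

lemma threshold {N q : ℕ} (hq : q ≤ N) (ν t : Fin N → ℝ) (hmono : Monotone ν)
    (hν0 : ∀ i, 0 ≤ ν i) (ht0 : ∀ i, 0 ≤ t i) (ht1 : ∀ i, t i ≤ 1)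
    (hts : (q : ℝ) ≤ ∑ i, t i) :
    ∑ i ∈ Finset.univ.filter (fun i : Fin N => (i : ℕ) < q), ν i ≤ ∑ i, ν i * t i := by
  rcases Nat.eq_zero_or_pos q with h0 | hpos
  · subst h0
    rw [show (Finset.univ.filter (fun i : Fin N => (i:ℕ) < 0)) = ∅ by
      ext x; simp]
    simp only [Finset.sum_empty]
    exact Finset.sum_nonneg fun i _ => mul_nonneg (hν0 i) (ht0 i)
  · set θ : ℝ := ν ⟨q - 1, by omega⟩ with hθ
    have hθ0 : 0 ≤ θ := hν0 _
    have key : ∀ i : Fin N, (if (i : ℕ) < q then ν i - θ else 0) ≤ (ν i - θ) * t i := by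
      intro i
      by_cases h : (i : ℕ) < q
      · simp only [h, if_true]
        have hνθ : ν i ≤ θ := hmono (by simp [Fin.le_def]; omega)
        nlinarith [ht1 i, ht0 i]
      · simp only [h, if_false]
        have hνθ : θ ≤ ν i := hmono (by simp [Fin.le_def]; omega)
        exact mul_nonneg (by linarith) (ht0 i)
    have hcard := card_filter_lt_fin N q hq
    have h1 : ∑ i : Fin N, (if (i : ℕ) < q then ν i - θ else 0) ≤ ∑ i, (ν i - θ) * t i :=
      Finset.sum_le_sum fun i _ => key i
    have h2 : ∑ i : Fin N, (if (i : ℕ) < q then ν i - θ else 0)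
        = (∑ i ∈ Finset.univ.filter (fun i : Fin N => (i : ℕ) < q), ν i) - q * θ := by
      rw [← Finset.sum_filter, Finset.sum_sub_distrib, Finset.sum_const, hcard]
      ring_nf
      try simp [nsmul_eq_mul]
      try ring
    have h3 : ∑ i, (ν i - θ) * t i = (∑ i, ν i * t i) - θ * ∑ i, t i := by
      rw [Finset.mul_sum, ← Finset.sum_sub_distrib]
      congr 1; ext i; ring
    have h4 : θ * (q : ℝ) ≤ θ * ∑ i, t i := mul_le_mul_of_nonneg_left hts hθ0
    nlinarith [h1, h2, h3, h4]

set_option maxHeartbeats 2000000 in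
lemma eckart_young_lower {n nt m : ℕ} (X : Matrix (Fin n) (Fin nt) ℝ)
    (D : Matrix (Fin n) (Fin m) ℝ) (E : Matrix (Fin m) (Fin nt) ℝ) :
    ∑ j ∈ Finset.univ.filter (fun j : Fin nt => m ≤ (j : ℕ)), (singularValues X j) ^ 2
      ≤ ∑ i, ∑ j, (X i j - (D * E) i j) ^ 2 := by
  classical
  set G : Matrix (Fin nt) (Fin nt) ℝ := Xᵀ * X with hGdef
  have hG : G.IsHermitian := Matrix.isHermitian_conjTranspose_mul_self X
  set μ : Fin nt → ℝ := hG.eigenvalues with hμdef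
  have hμ0 : ∀ i, 0 ≤ μ i := by
    have hpsd : G.PosSemidef := by simpa [hGdef] using Matrix.posSemidef_conjTranspose_mul_self X
    exact fun i => hpsd.eigenvalues_nonneg i
  have hsym : Gᵀ = G := by
    ext i j
    have := congrFun (congrFun hG.eq i) j
    simpa [Matrix.conjTranspose_apply] using this
  set u : OrthonormalBasis (Fin nt) ℝ (EuclideanSpace ℝ (Fin nt)) := hG.eigenvectorBasis with hu
  set e := WithLp.equiv 2 (Fin nt → ℝ) with he
  have innerE : ∀ x y : EuclideanSpace ℝ (Fin nt), (inner ℝ x y : ℝ) = (e x) ⬝ᵥ (e y) := by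
    intro x y
    simp [PiLp.inner_apply, RCLike.inner_apply, dotProduct, he]
    exact Finset.sum_congr rfl fun i _ => mul_comm _ _
  -- Rayleigh
  have rayleigh : ∀ x : EuclideanSpace ℝ (Fin nt),
      (e x) ⬝ᵥ (G *ᵥ (e x)) = ∑ i, μ i * (inner ℝ (u i) x : ℝ) ^ 2 := by
    intro x
    have hy := u.sum_inner_mul_inner x (e.symm (G *ᵥ (e x)))
    have hui : ∀ i, (inner ℝ (u i) (e.symm (G *ᵥ (e x))) : ℝ) = μ i * (inner ℝ (u i) x : ℝ) := by
      intro i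
      rw [innerE]
      simp only [Equiv.apply_symm_apply]
      rw [dotProduct_mulVec, ← hsym, Matrix.vecMul_transpose]
      rw [show G *ᵥ e (u i) = G *ᵥ (hG.eigenvectorBasis i).ofLp from rfl]
      rw [hG.mulVec_eigenvectorBasis]
      rw [smul_dotProduct]
      rw [innerE]
      rfl
    have hxy : (inner ℝ x (e.symm (G *ᵥ (e x))) : ℝ) = (e x) ⬝ᵥ (G *ᵥ (e x)) := by
      rw [innerE]; simp
    rw [hxy] at hy
    rw [← hy]
    refine Finset.sum_congr rfl fun i _ => ?_
    rw [hui i, real_inner_comm x (u i)]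
    ring
  -- kernel and orthonormal family
  set L := (E.mulVecLin).comp (WithLp.linearEquiv 2 ℝ (Fin nt → ℝ)).toLinearMap with hL
  set K := LinearMap.ker L with hK
  set p := Module.finrank ℝ K with hp
  have hpq : nt - m ≤ p := by
    have h1 := LinearMap.finrank_range_add_finrank_ker L
    have h2 : Module.finrank ℝ (LinearMap.range L) ≤ m := by
      have := Submodule.finrank_le (LinearMap.range L)
      simpa using this
    have h3 : Module.finrank ℝ (WithLp 2 (Fin nt → ℝ)) = nt := finrank_euclideanSpace_fin
    rw [← hK] at h1
    omega
  set b := stdOrthonormalBasis ℝ K with hb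
  set w : Fin p → EuclideanSpace ℝ (Fin nt) := fun j => (b j : EuclideanSpace ℝ (Fin nt)) with hw
  have hwon : Orthonormal ℝ w := by
    have h := b.orthonormal
    rw [orthonormal_iff_ite] at h ⊢
    intro i j
    rw [hw]
    rw [← Submodule.coe_inner]
    exact h i j
  have hEw : ∀ j, E *ᵥ (e (w j)) = 0 := by
    intro j
    have hm : L ((b j : EuclideanSpace ℝ (Fin nt))) = 0 := LinearMap.mem_ker.mp (b j).2
    exact hm
  -- t
  set t : Fin nt → ℝ := fun i => ∑ j, (inner ℝ (u i) (w j) : ℝ) ^ 2 with ht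
  have ht0 : ∀ i, 0 ≤ t i := fun i => Finset.sum_nonneg fun j _ => sq_nonneg _
  have ht1 : ∀ i, t i ≤ 1 := by
    intro i
    have hb := hwon.sum_inner_products_le (u i) (s := Finset.univ)
    have hn : ‖u i‖ = 1 := u.orthonormal.1 i
    calc t i = ∑ j, ‖(inner ℝ (w j) (u i) : ℝ)‖ ^ 2 := by
          rw [ht]
          refine Finset.sum_congr rfl fun j _ => ?_
          rw [Real.norm_eq_abs, sq_abs, real_inner_comm]
      _ ≤ ‖u i‖ ^ 2 := hb
      _ = 1 := by rw [hn]; norm_num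
  have hts : ((nt - m : ℕ) : ℝ) ≤ ∑ i, t i := by
    have hsum : ∑ i, t i = (p : ℝ) := by
      rw [ht]
      rw [Finset.sum_comm]
      have : ∀ j, ∑ i, (inner ℝ (u i) (w j) : ℝ) ^ 2 = 1 := by
        intro j
        have hp2 := u.sum_inner_mul_inner (w j) (w j)
        have hww : (inner ℝ (w j) (w j) : ℝ) = 1 := by
          rw [real_inner_self_eq_norm_sq, hwon.1 j]; norm_num
        rw [hww] at hp2
        rw [← hp2]
        refine Finset.sum_congr rfl fun i _ => ?_
        rw [real_inner_comm (w j) (u i)]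
        ring
      rw [Finset.sum_congr rfl (fun j _ => this j)]
      simp
    rw [hsum]
    exact_mod_cast hpq
  -- Frobenius bound
  set Y : Matrix (Fin n) (Fin nt) ℝ := X - D * E with hY
  have frob : ∑ j', (X *ᵥ (e (w j'))) ⬝ᵥ (X *ᵥ (e (w j'))) ≤ ∑ i, ∑ j, (Y i j) ^ 2 := by
    have hYw : ∀ j', Y *ᵥ (e (w j')) = X *ᵥ (e (w j')) := by
      intro j'
      rw [hY, Matrix.sub_mulVec, ← Matrix.mulVec_mulVec, hEw, Matrix.mulVec_zero, sub_zero]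
    have hrow : ∀ i, ∑ j', ((Y *ᵥ (e (w j'))) i) ^ 2 ≤ ∑ j, (Y i j) ^ 2 := by
      intro i
      set r : EuclideanSpace ℝ (Fin nt) := e.symm (fun j => Y i j) with hr
      have hb2 := hwon.sum_inner_products_le r (s := Finset.univ)
      have hnorm : ‖r‖ ^ 2 = ∑ j, (Y i j) ^ 2 := by
        rw [← real_inner_self_eq_norm_sq, innerE]
        simp [hr, dotProduct, sq]
      calc ∑ j', ((Y *ᵥ (e (w j'))) i) ^ 2 = ∑ j', ‖(inner ℝ (w j') r : ℝ)‖ ^ 2 := by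
            refine Finset.sum_congr rfl fun j' _ => ?_
            rw [Real.norm_eq_abs, sq_abs, real_inner_comm, innerE]
            simp only [hr, Equiv.apply_symm_apply]
            try rfl
        _ ≤ ‖r‖ ^ 2 := hb2
        _ = ∑ j, (Y i j) ^ 2 := hnorm
    calc ∑ j', (X *ᵥ (e (w j'))) ⬝ᵥ (X *ᵥ (e (w j')))
        = ∑ j', ∑ i, ((Y *ᵥ (e (w j'))) i) ^ 2 := by
          refine Finset.sum_congr rfl fun j' _ => ?_
          rw [hYw]
          simp [dotProduct, sq]
      _ = ∑ i, ∑ j', ((Y *ᵥ (e (w j'))) i) ^ 2 := Finset.sum_comm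
      _ ≤ ∑ i, ∑ j, (Y i j) ^ 2 := Finset.sum_le_sum fun i _ => hrow i
  -- spectral sum
  have spec : ∑ j', (X *ᵥ (e (w j'))) ⬝ᵥ (X *ᵥ (e (w j'))) = ∑ i, μ i * t i := by
    have hXG : ∀ v : Fin nt → ℝ, (X *ᵥ v) ⬝ᵥ (X *ᵥ v) = v ⬝ᵥ (G *ᵥ v) := by
      intro v
      rw [hGdef, ← Matrix.mulVec_mulVec]
      rw [dotProduct_mulVec v Xᵀ (X *ᵥ v)]
      rw [Matrix.vecMul_transpose]
    calc ∑ j', (X *ᵥ (e (w j'))) ⬝ᵥ (X *ᵥ (e (w j')))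
        = ∑ j', ∑ i, μ i * (inner ℝ (u i) (w j') : ℝ) ^ 2 := by
          refine Finset.sum_congr rfl fun j' _ => ?_
          rw [hXG, rayleigh]
      _ = ∑ i, ∑ j', μ i * (inner ℝ (u i) (w j') : ℝ) ^ 2 := Finset.sum_comm
      _ = ∑ i, μ i * t i := by
          refine Finset.sum_congr rfl fun i _ => ?_
          rw [ht, Finset.mul_sum]
  -- sort and threshold
  set σp := Tuple.sort μ with hσ
  have hmono : Monotone (μ ∘ σp) := Tuple.monotone_sort μ
  have hthr := threshold (q := nt - m) (Nat.sub_le nt m) (fun i => μ (σp i)) (fun i => t (σp i))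
    hmono (fun i => hμ0 _) (fun i => ht0 _) (fun i => ht1 _)
    (by rw [Equiv.sum_comp σp t]; exact hts)
  have hperm : ∑ i, μ (σp i) * t (σp i) = ∑ i, μ i * t i :=
    Equiv.sum_comp σp (fun i => μ i * t i)
  -- LHS rewrite
  have hLHS : ∑ j ∈ Finset.univ.filter (fun j : Fin nt => m ≤ (j : ℕ)), (singularValues X j) ^ 2
      = ∑ i ∈ Finset.univ.filter (fun i : Fin nt => (i : ℕ) < nt - m), μ (σp i) := by
    rw [Finset.sum_bij' (i := fun j _ => j.rev) (j := fun i _ => i.rev)]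
    · intro a ha
      simp only [Finset.mem_filter, Finset.mem_univ, true_and] at ha ⊢
      have h1 := a.isLt
      have h2 := Fin.val_rev a
      omega
    · intro a ha
      simp only [Finset.mem_filter, Finset.mem_univ, true_and] at ha ⊢
      have h1 := a.isLt
      have h2 := Fin.val_rev a
      omega
    · intro a _; exact Fin.rev_rev a
    · intro a _; exact Fin.rev_rev a
    · intro a _
      rw [singularValues]
      exact Real.sq_sqrt (hμ0 _)
  rw [hLHS]
  calc ∑ i ∈ Finset.univ.filter (fun i : Fin nt => (i : ℕ) < nt - m), μ (σp i)
      ≤ ∑ i, μ (σp i) * t (σp i) := hthr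
    _ = ∑ i, μ i * t i := hperm
    _ = ∑ j', (X *ᵥ (e (w j'))) ⬝ᵥ (X *ᵥ (e (w j'))) := spec.symm
    _ ≤ ∑ i, ∑ j, (Y i j) ^ 2 := frob
    _ = ∑ i, ∑ j, (X i j - (D * E) i j) ^ 2 := by rw [hY]; rfl

lemma euclidNorm_eq_norm {n : ℕ} (v : Fin n → ℝ) :
    euclidNorm v = ‖(WithLp.equiv 2 (Fin n → ℝ)).symm v‖ := by
  rw [EuclideanSpace.norm_eq, euclidNorm]
  congr 1
  refine Finset.sum_congr rfl fun i _ => ?_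
  rw [Real.norm_eq_abs, sq_abs]
  rfl

lemma euclidNorm_nonneg {n : ℕ} (v : Fin n → ℝ) : 0 ≤ euclidNorm v := Real.sqrt_nonneg _

lemma euclidNorm_smul {n : ℕ} (c : ℝ) (v : Fin n → ℝ) : euclidNorm (c • v) = |c| * euclidNorm v := by
  rw [euclidNorm_eq_norm, euclidNorm_eq_norm]
  have : (WithLp.equiv 2 (Fin n → ℝ)).symm (c • v) = c • (WithLp.equiv 2 (Fin n → ℝ)).symm v := rfl
  rw [this, norm_smul, Real.norm_eq_abs]

lemma euclidNorm_sub_le {n : ℕ} (v w : Fin n → ℝ) : euclidNorm (v - w) ≤ euclidNorm v + euclidNorm w := by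
  rw [euclidNorm_eq_norm, euclidNorm_eq_norm, euclidNorm_eq_norm]
  have : (WithLp.equiv 2 (Fin n → ℝ)).symm (v - w)
      = (WithLp.equiv 2 (Fin n → ℝ)).symm v - (WithLp.equiv 2 (Fin n → ℝ)).symm w := rfl
  rw [this]
  exact norm_sub_le _ _

lemma euclidNorm_sq {n : ℕ} (v : Fin n → ℝ) : euclidNorm v ^ 2 = ∑ i, (v i) ^ 2 :=
  Real.sq_sqrt (Finset.sum_nonneg fun i _ => sq_nonneg _)

lemma euclidNorm_zero_of {n : ℕ} (v : Fin n → ℝ) (h : v = 0) : euclidNorm v = 0 := by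
  subst h; simp [euclidNorm]

lemma relu_smul (c t : ℝ) (hc : 0 ≤ c) : relu (c * t) = c * relu t := by
  rcases le_or_gt 0 t with h | h
  · rw [relu, relu, max_eq_left h, max_eq_left (mul_nonneg hc h)]
  · rw [relu, relu, max_eq_right h.le, max_eq_right (by nlinarith), mul_zero]

lemma relu_sub_relu_neg (t : ℝ) : relu t - relu (-t) = t := by
  rcases le_or_gt 0 t with h | h
  · rw [relu, relu, max_eq_left h, max_eq_right (by linarith)]; ring
  · rw [relu, relu, max_eq_right h.le, max_eq_left (by linarith)]; ring


set_option maxHeartbeats 2000000 in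
theorem stmt_10 (m n nt k : ℕ) (hmn : m ≤ n) (hnt : 0 < nt)
    (A : Matrix (Fin m) (Fin n) ℝ)
    (W₁ : Matrix (Fin k) (Fin m) ℝ) (W₂ : Matrix (Fin n) (Fin k) ℝ)
    (f : (Fin m → ℝ) → (Fin n → ℝ))
    (hf : ∀ y, f y = W₂.mulVec (fun i => relu (W₁.mulVec y i)))
    (xs : Fin nt → (Fin n → ℝ)) (hxs : ∀ j, euclidNorm (xs j) = 1)
    (X : Matrix (Fin n) (Fin nt) ℝ) (hX : ∀ i j, X i j = xs j i) :
    Real.sqrt ((1 / (nt : ℝ)) *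
        ∑ j ∈ Finset.univ.filter (fun j : Fin nt => m ≤ (j : ℕ)), (singularValues X j) ^ 2) ≤
      sSup {r : ℝ | ∃ (c : ℝ) (j : Fin nt), c • xs j ≠ 0 ∧
        r = euclidNorm (f (A.mulVec (c • xs j)) - c • xs j) / euclidNorm (c • xs j)} := by
  classical
  set S := {r : ℝ | ∃ (c : ℝ) (j : Fin nt), c • xs j ≠ 0 ∧
      r = euclidNorm (f (A.mulVec (c • xs j)) - c • xs j) / euclidNorm (c • xs j)} with hS
  set a : Fin nt → ℝ := fun j => euclidNorm (f (A.mulVec (xs j)) - xs j) with ha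
  set bb : Fin nt → ℝ := fun j => euclidNorm (f (A.mulVec (-xs j)) + xs j) with hbb
  have hxs0 : ∀ j, xs j ≠ 0 := by
    intro j h
    have := hxs j
    rw [euclidNorm_zero_of _ h] at this
    norm_num at this
  -- positive homogeneity of f
  have hfpos : ∀ (c : ℝ), 0 ≤ c → ∀ y, f (c • y) = c • f y := by
    intro c hc y
    rw [hf, hf]
    have h1 : W₁.mulVec (c • y) = c • W₁.mulVec y := Matrix.mulVec_smul _ _ _
    have h2 : (fun i => relu (W₁.mulVec (c • y) i)) = c • (fun i => relu (W₁.mulVec y i)) := by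
      funext i
      rw [h1]
      simp only [Pi.smul_apply, smul_eq_mul]
      exact relu_smul c _ hc
    rw [h2]
    exact Matrix.mulVec_smul _ _ _
  -- membership of a j and bb j in S
  have hmem_a : ∀ j, a j ∈ S := by
    intro j
    refine ⟨1, j, ?_, ?_⟩
    · rw [one_smul]; exact hxs0 j
    · rw [one_smul, hxs j, div_one]
  have hmem_b : ∀ j, bb j ∈ S := by
    intro j
    refine ⟨-1, j, ?_, ?_⟩
    · rw [neg_smul, one_smul, neg_ne_zero]; exact hxs0 j
    · rw [neg_smul, one_smul, sub_neg_eq_add]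
      have hnx : euclidNorm (-xs j) = 1 := by
        rw [show (-xs j) = (-1 : ℝ) • xs j by module, euclidNorm_smul]
        simp [hxs j]
      rw [hnx, div_one]
  -- S is contained in the union of ranges
  have hsub : S ⊆ Set.range a ∪ Set.range bb := by
    rintro r ⟨c, j, hne, hr⟩
    have hc0 : c ≠ 0 := by
      intro h; subst h; rw [zero_smul] at hne; exact hne rfl
    rcases lt_or_gt_of_ne hc0 with hneg | hpos
    · right
      refine ⟨j, ?_⟩
      set d : ℝ := -c with hd
      have hdpos : 0 < d := by simp [hd]; linarith
      have hcx : c • xs j = d • (-xs j) := by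
        rw [hd]; module
      have hAs : A.mulVec (c • xs j) = d • A.mulVec (-xs j) := by
        rw [hcx]; exact Matrix.mulVec_smul _ _ _
      have hfc : f (A.mulVec (c • xs j)) = d • f (A.mulVec (-xs j)) := by
        rw [hAs]
        rw [show (d • A.mulVec (-xs j)) = d • (A.mulVec (-xs j)) from rfl]
        rw [← hfpos d hdpos.le (A.mulVec (-xs j))]
      have hnum : f (A.mulVec (c • xs j)) - c • xs j
          = d • (f (A.mulVec (-xs j)) + xs j) := by
        rw [hfc, hcx]; module
      rw [hr, hnum, hcx, euclidNorm_smul, euclidNorm_smul]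
      rw [abs_of_pos hdpos]
      have hnx : euclidNorm (-xs j) = 1 := by
        rw [show (-xs j) = (-1 : ℝ) • xs j by module, euclidNorm_smul]
        simp [hxs j]
      rw [hnx, mul_one, hbb]
      try field_simp
    · left
      refine ⟨j, ?_⟩
      have hAs : A.mulVec (c • xs j) = c • A.mulVec (xs j) := Matrix.mulVec_smul _ _ _
      have hfc : f (A.mulVec (c • xs j)) = c • f (A.mulVec (xs j)) := by
        rw [hAs, ← hfpos c hpos.le]
      have hnum : f (A.mulVec (c • xs j)) - c • xs j = c • (f (A.mulVec (xs j)) - xs j) := by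
        rw [hfc]; module
      rw [hr, hnum, euclidNorm_smul, euclidNorm_smul]
      rw [abs_of_pos hpos, hxs j, mul_one, ha]
      try field_simp
  -- bddAbove, sSup bounds
  have hbdd : BddAbove S :=
    ((Set.finite_range a).union (Set.finite_range bb)).bddAbove.mono hsub
  set s := sSup S with hs
  have hub_a : ∀ j, a j ≤ s := fun j => le_csSup hbdd (hmem_a j)
  have hub_b : ∀ j, bb j ≤ s := fun j => le_csSup hbdd (hmem_b j)
  have hs0 : 0 ≤ s := le_trans (euclidNorm_nonneg _) (hub_a ⟨0, hnt⟩)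
  -- matrices
  set D : Matrix (Fin n) (Fin m) ℝ := (1/2 : ℝ) • (W₂ * W₁) with hD
  set E : Matrix (Fin m) (Fin nt) ℝ := A * X with hE
  have hEcol : ∀ j, (fun l => E l j) = A.mulVec (xs j) := by
    intro j
    funext l
    rw [hE, Matrix.mul_apply, Matrix.mulVec]
    simp only [dotProduct]
    refine Finset.sum_congr rfl fun i _ => ?_
    rw [hX]
  have hcol : ∀ i j, ((W₂ * W₁) * E) i j
      = f (A.mulVec (xs j)) i - f (A.mulVec (-xs j)) i := by
    intro i j
    have h1 : ((W₂ * W₁) * E) i j = ((W₂ * W₁).mulVec (A.mulVec (xs j))) i := by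
      rw [Matrix.mul_apply, Matrix.mulVec]
      simp only [dotProduct]
      refine Finset.sum_congr rfl fun l _ => ?_
      rw [← hEcol j]
    rw [h1, ← Matrix.mulVec_mulVec]
    rw [hf, hf]
    have h2 : W₁.mulVec (A.mulVec (-xs j)) = -(W₁.mulVec (A.mulVec (xs j))) := by
      rw [Matrix.mulVec_neg, Matrix.mulVec_neg]
    rw [h2]
    have h3 : (W₂.mulVec (fun i => relu (W₁.mulVec (A.mulVec (xs j)) i)))
        - (W₂.mulVec (fun i => relu ((-(W₁.mulVec (A.mulVec (xs j)))) i)))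
        = (W₂.mulVec (W₁.mulVec (A.mulVec (xs j)))) := by
      rw [← Matrix.mulVec_sub]
      have h4 : ((fun i => relu ((W₁.mulVec (A.mulVec (xs j))) i))
          - fun i => relu ((-(W₁.mulVec (A.mulVec (xs j)))) i)) = W₁.mulVec (A.mulVec (xs j)) := by
        funext l
        simp only [Pi.sub_apply, Pi.neg_apply]
        exact relu_sub_relu_neg _
      rw [h4]
    exact (congrFun h3 i).symm
  -- column bound
  have hcolbound : ∀ j, ∑ i, (X i j - (D * E) i j) ^ 2 ≤ s ^ 2 := by
    intro j
    set v : Fin n → ℝ := f (A.mulVec (xs j)) - xs j with hv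
    set vb : Fin n → ℝ := f (A.mulVec (-xs j)) + xs j with hvb
    have hentry : ∀ i, X i j - (D * E) i j = (-(1/2) : ℝ) * (v i - vb i) := by
      intro i
      have : (D * E) i j = (1/2 : ℝ) * (((W₂ * W₁) * E) i j) := by
        rw [hD, Matrix.smul_mul, Matrix.smul_apply, smul_eq_mul]
      rw [this, hcol i j, hX i j, hv, hvb]
      simp only [Pi.sub_apply, Pi.add_apply]
      ring
    have hsum : ∑ i, (X i j - (D * E) i j) ^ 2 = (1/4 : ℝ) * euclidNorm (v - vb) ^ 2 := by
      rw [euclidNorm_sq]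
      rw [Finset.mul_sum]
      refine Finset.sum_congr rfl fun i _ => ?_
      rw [hentry i]
      simp only [Pi.sub_apply]
      ring
    rw [hsum]
    have htri : euclidNorm (v - vb) ≤ a j + bb j := by
      have := euclidNorm_sub_le v vb
      rw [ha, hbb] at *
      exact this
    have h2s : a j + bb j ≤ 2 * s := by
      have := hub_a j
      have := hub_b j
      linarith
    have h0 : (0:ℝ) ≤ euclidNorm (v - vb) := euclidNorm_nonneg _
    nlinarith
  -- total bound
  have htotal : ∑ i, ∑ j, (X i j - (D * E) i j) ^ 2 ≤ nt * s ^ 2 := by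
    rw [Finset.sum_comm]
    calc ∑ j, ∑ i, (X i j - (D * E) i j) ^ 2 ≤ ∑ _j : Fin nt, s ^ 2 :=
          Finset.sum_le_sum fun j _ => hcolbound j
      _ = nt * s ^ 2 := by rw [Finset.sum_const]; simp [nsmul_eq_mul]
  have hT := eckart_young_lower X D E
  have hfinal : (1 / (nt : ℝ)) *
      ∑ j ∈ Finset.univ.filter (fun j : Fin nt => m ≤ (j : ℕ)), (singularValues X j) ^ 2
      ≤ s ^ 2 := by
    have hntpos : (0:ℝ) < nt := by exact_mod_cast hnt
    rw [div_mul_eq_mul_div, one_mul, div_le_iff₀ hntpos]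
    calc ∑ j ∈ Finset.univ.filter (fun j : Fin nt => m ≤ (j : ℕ)), (singularValues X j) ^ 2
        ≤ ∑ i, ∑ j, (X i j - (D * E) i j) ^ 2 := hT
      _ ≤ nt * s ^ 2 := htotal
      _ = s ^ 2 * nt := by ring
  calc Real.sqrt ((1 / (nt : ℝ)) *
        ∑ j ∈ Finset.univ.filter (fun j : Fin nt => m ≤ (j : ℕ)), (singularValues X j) ^ 2)
      ≤ Real.sqrt (s ^ 2) := Real.sqrt_le_sqrt hfinal
    _ = s := by rw [Real.sqrt_sq hs0]
end

section
/- Let A ∈ ℝ^{m×n} with m ≤ n, and let f: ℝᵐ → ℝⁿ be represented by an unbiased ReLU network with one hidden layer, f(y) = W₂·ReLU(W₁y). Then sup over 1-sparse nonzero x ∈ ℝⁿ of ‖x − f(Ax)‖₂/‖x‖₂ ≥ sqrt(1 − m/n). -/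
/-- Euclidean norm of a vector in `Fin n → ℝ`. -/
noncomputable def enorm {n : ℕ} (v : Fin n → ℝ) : ℝ :=
  Real.sqrt (∑ i, (v i) ^ 2)

open scoped RealInnerProductSpace

section aux

variable {n : ℕ}

lemma enorm_eq_norm (v : Fin n → ℝ) :
    _root_.enorm v = ‖(WithLp.equiv 2 (Fin n → ℝ)).symm v‖ := by
  rw [EuclideanSpace.norm_eq, _root_.enorm]
  congr 1
  refine Finset.sum_congr rfl fun i _ => ?_
  rw [Real.norm_eq_abs, sq_abs]
  rfl

lemma enorm_smul' (c : ℝ) (v : Fin n → ℝ) : _root_.enorm (c • v) = |c| * _root_.enorm v := by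
  rw [enorm_eq_norm, enorm_eq_norm, ← Real.norm_eq_abs, ← norm_smul]
  congr 1

lemma enorm_neg' (v : Fin n → ℝ) : _root_.enorm (-v) = _root_.enorm v := by
  have := enorm_smul' (-1) v
  simpa using this

lemma enorm_add_le' (u v : Fin n → ℝ) : _root_.enorm (u + v) ≤ _root_.enorm u + _root_.enorm v := by
  rw [enorm_eq_norm, enorm_eq_norm, enorm_eq_norm]
  exact norm_add_le _ _

lemma enorm_single (i : Fin n) : _root_.enorm (Pi.single i (1:ℝ)) = 1 := by
  rw [enorm_eq_norm]
  have : (WithLp.equiv 2 (Fin n → ℝ)).symm (Pi.single i (1:ℝ)) =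
      EuclideanSpace.single i (1:ℝ) := rfl
  rw [this, EuclideanSpace.norm_single, norm_one]

/-- key Frobenius-type lemma: a linear map of rank at most `m` on `ℝⁿ` moves some
standard basis vector by at least `√(1 - m/n)`. -/
lemma key_frobenius {m : ℕ} (hmn : m ≤ n) (hn : 0 < n)
    (T : EuclideanSpace ℝ (Fin n) →ₗ[ℝ] EuclideanSpace ℝ (Fin n))
    (hT : Module.finrank ℝ (LinearMap.range T) ≤ m) :
    ∃ i : Fin n, Real.sqrt (1 - (m:ℝ)/n) ≤
      ‖EuclideanSpace.single i (1:ℝ) - T (EuclideanSpace.single i 1)‖ := by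
  classical
  set V := (LinearMap.range T)ᗮ with hVdef
  have hfr : Module.finrank ℝ (LinearMap.range T) + Module.finrank ℝ V
      = Module.finrank ℝ (EuclideanSpace ℝ (Fin n)) := Submodule.finrank_add_finrank_orthogonal _
  have hE : Module.finrank ℝ (EuclideanSpace ℝ (Fin n)) = n := finrank_euclideanSpace_fin
  have hd : n ≤ m + Module.finrank ℝ V := by omega
  set d := Module.finrank ℝ V with hddef
  let b := stdOrthonormalBasis ℝ V
  let w : Fin d → EuclideanSpace ℝ (Fin n) := fun j => (b j : EuclideanSpace ℝ (Fin n))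
  have hw : Orthonormal ℝ w := b.orthonormal.comp_linearIsometry V.subtypeₗᵢ
  have hwV : ∀ j, w j ∈ V := fun j => (b j).2
  -- the vectors we study
  set N : Fin n → EuclideanSpace ℝ (Fin n) := fun i =>
    EuclideanSpace.single i (1:ℝ) - T (EuclideanSpace.single i 1) with hNdef
  -- inner products
  have hinner : ∀ (j : Fin d) (i : Fin n), (inner ℝ (w j) (N i) : ℝ) = w j i := by
    intro j i
    have h0 : (inner ℝ (w j) (T (EuclideanSpace.single i 1)) : ℝ) = 0 := by
      have := (Submodule.mem_orthogonal (LinearMap.range T) (w j)).mp (hwV j)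
      have h := this (T (EuclideanSpace.single i 1)) (LinearMap.mem_range_self _ _)
      rwa [real_inner_comm] at h
    rw [hNdef]
    simp only [inner_sub_right, h0, sub_zero]
    rw [EuclideanSpace.inner_single_right]
    simp
  -- Parseval for single coordinates
  have hrow : ∀ j : Fin d, ∑ i : Fin n, (w j i) ^ 2 = 1 := by
    intro j
    have h1 : ‖w j‖ = 1 := hw.1 j
    have h2 : ‖w j‖ = Real.sqrt (∑ i : Fin n, ‖w j i‖ ^ 2) := EuclideanSpace.norm_eq _
    rw [h1] at h2
    have h3 : (∑ i : Fin n, ‖w j i‖ ^ 2) = ∑ i : Fin n, (w j i) ^ 2 := by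
      refine Finset.sum_congr rfl fun i _ => ?_
      rw [Real.norm_eq_abs, sq_abs]
    have h4 : Real.sqrt (∑ i : Fin n, (w j i) ^ 2) = 1 := by rw [← h3, ← h2]
    have h5 : (0:ℝ) ≤ ∑ i : Fin n, (w j i) ^ 2 := by positivity
    nlinarith [Real.sq_sqrt h5]
  -- Bessel
  have hbessel : ∀ i : Fin n, ∑ j : Fin d, (w j i) ^ 2 ≤ ‖N i‖ ^ 2 := by
    intro i
    have := hw.sum_inner_products_le (N i) (s := Finset.univ)
    calc ∑ j : Fin d, (w j i) ^ 2 = ∑ j : Fin d, ‖(inner ℝ (w j) (N i) : ℝ)‖ ^ 2 := by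
          refine Finset.sum_congr rfl fun j _ => ?_
          rw [hinner, Real.norm_eq_abs, sq_abs]
      _ ≤ ‖N i‖ ^ 2 := this
  -- total sum
  have htot : (n : ℝ) - m ≤ ∑ i : Fin n, ‖N i‖ ^ 2 := by
    have hsum : ∑ i : Fin n, ∑ j : Fin d, (w j i) ^ 2 = (d : ℝ) := by
      rw [Finset.sum_comm]
      rw [Finset.sum_congr rfl fun j _ => hrow j]
      simp
    have h6 : ∑ i : Fin n, ∑ j : Fin d, (w j i) ^ 2 ≤ ∑ i : Fin n, ‖N i‖ ^ 2 :=
      Finset.sum_le_sum fun i _ => hbessel i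
    have hd' : (n : ℝ) - m ≤ (d : ℝ) := by
      have : (n : ℝ) ≤ (m : ℝ) + d := by exact_mod_cast hd
      linarith
    linarith
  -- pigeonhole
  have hpig : ∃ i : Fin n, ((n:ℝ) - m)/n ≤ ‖N i‖ ^ 2 := by
    have hne : (Finset.univ : Finset (Fin n)).Nonempty := by
      simpa [Finset.univ_nonempty_iff] using Fin.pos_iff_nonempty.mp hn
    have hsum2 : ∑ _i : Fin n, ((n:ℝ) - m)/n ≤ ∑ i : Fin n, ‖N i‖ ^ 2 := by
      rw [Finset.sum_const, Finset.card_univ, Fintype.card_fin, nsmul_eq_mul]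
      rw [mul_div_cancel₀]
      · exact htot
      · exact_mod_cast hn.ne'
    obtain ⟨i, _, hi⟩ := Finset.exists_le_of_sum_le hne hsum2
    exact ⟨i, hi⟩
  obtain ⟨i, hi⟩ := hpig
  refine ⟨i, ?_⟩
  have heq : ((n:ℝ) - m)/n = 1 - (m:ℝ)/n := by
    field_simp
  rw [heq] at hi
  calc Real.sqrt (1 - (m:ℝ)/n) ≤ Real.sqrt (‖N i‖ ^ 2) := Real.sqrt_le_sqrt hi
    _ = ‖N i‖ := by rw [Real.sqrt_sq (norm_nonneg _)]

end aux

theorem stmt_11 (m n k : ℕ) (hmn : m ≤ n) (hn : 0 < n)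
    (A : Matrix (Fin m) (Fin n) ℝ)
    (W₁ : Matrix (Fin k) (Fin m) ℝ) (W₂ : Matrix (Fin n) (Fin k) ℝ)
    (f : (Fin m → ℝ) → (Fin n → ℝ))
    (hf : ∀ y, f y = W₂.mulVec (fun i => relu (W₁.mulVec y i))) :
    Real.sqrt (1 - (m : ℝ) / (n : ℝ)) ≤
      sSup {r : ℝ | ∃ x : Fin n → ℝ, (∀ i j, x i ≠ 0 → x j ≠ 0 → i = j) ∧ x ≠ 0 ∧
        r = _root_.enorm (x - f (A.mulVec x)) / _root_.enorm x} := by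
  classical
  set S := {r : ℝ | ∃ x : Fin n → ℝ, (∀ i j, x i ≠ 0 → x j ≠ 0 → i = j) ∧ x ≠ 0 ∧
      r = _root_.enorm (x - f (A.mulVec x)) / _root_.enorm x} with hSdef
  -- relu facts
  have hrelu_smul : ∀ (c t : ℝ), 0 ≤ c → relu (c * t) = c * relu t := by
    intro c t hc
    simp only [relu]
    rw [mul_max_of_nonneg _ _ hc, mul_zero]
  -- positive homogeneity of f
  have hhom : ∀ (c : ℝ), 0 ≤ c → ∀ y : Fin m → ℝ, f (c • y) = c • f y := by
    intro c hc y
    rw [hf, hf]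
    rw [Matrix.mulVec_smul]
    have h2 : (fun i => relu ((c • W₁.mulVec y) i)) = c • fun i => relu (W₁.mulVec y i) := by
      funext i
      simp only [Pi.smul_apply, smul_eq_mul]
      exact hrelu_smul c _ hc
    rw [h2, Matrix.mulVec_smul]
  -- difference identity
  have hdiff : ∀ y : Fin m → ℝ, f y - f (-y) = (W₂ * W₁).mulVec y := by
    intro y
    rw [hf, hf, ← Matrix.mulVec_mulVec]
    have h3 : (fun i => relu (W₁.mulVec y i)) - (fun i => relu (W₁.mulVec (-y) i))
        = W₁.mulVec y := by
      funext i
      have hneg : W₁.mulVec (-y) i = -(W₁.mulVec y i) := by rw [Matrix.mulVec_neg]; rfl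
      simp only [Pi.sub_apply, hneg, relu]
      exact max_zero_sub_max_neg_zero_eq_self _
    rw [← Matrix.mulVec_sub, h3]
  -- the two families of ratios
  set rp : Fin n → ℝ := fun i => _root_.enorm (Pi.single i 1 - f (A.mulVec (Pi.single i 1))) with hrp
  set rn : Fin n → ℝ := fun i =>
    _root_.enorm (-Pi.single i 1 - f (A.mulVec (-Pi.single i 1))) with hrn
  -- memberships
  have hsp : ∀ (i j l : Fin n), (Pi.single i 1 : Fin n → ℝ) j ≠ 0 →
      (Pi.single i 1 : Fin n → ℝ) l ≠ 0 → j = l := by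
    intro i j l hj hl
    have hj' : j = i := by
      by_contra h; exact hj (Pi.single_eq_of_ne h 1)
    have hl' : l = i := by
      by_contra h; exact hl (Pi.single_eq_of_ne h 1)
    rw [hj', hl']
  have hnz : ∀ i : Fin n, (Pi.single i 1 : Fin n → ℝ) ≠ 0 := by
    intro i h
    have := congrFun h i
    simp at this
  have hmem1 : ∀ i : Fin n, rp i ∈ S := by
    intro i
    refine ⟨(Pi.single i 1 : Fin n → ℝ), hsp i, hnz i, ?_⟩
    rw [enorm_single, div_one]
  have hmem2 : ∀ i : Fin n, rn i ∈ S := by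
    intro i
    refine ⟨-Pi.single i 1, ?_, ?_, ?_⟩
    · intro j l hj hl
      exact hsp i j l (by simpa using hj) (by simpa using hl)
    · intro h
      exact hnz i (by simpa [neg_eq_zero] using h)
    · rw [enorm_neg', enorm_single, div_one]
  -- decomposition of 1-sparse vectors
  have hdecomp : ∀ x : Fin n → ℝ, (∀ i j, x i ≠ 0 → x j ≠ 0 → i = j) → x ≠ 0 →
      ∃ (i : Fin n) (c : ℝ), c ≠ 0 ∧ x = c • (Pi.single i 1 : Fin n → ℝ) := by
    intro x hs hx
    obtain ⟨i, hi⟩ := Function.ne_iff.mp hx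
    refine ⟨i, x i, hi, funext fun j => ?_⟩
    by_cases hj : j = i
    · subst hj; simp
    · have hxj : x j = 0 := by
        by_contra h; exact hj (hs j i h hi)
      simp [hxj, Pi.single_eq_of_ne hj]
  -- every element of S is one of the ratios
  have hval : ∀ r ∈ S, ∃ i : Fin n, r = rp i ∨ r = rn i := by
    rintro r ⟨x, hs, hx, rfl⟩
    obtain ⟨i, c, hc, rfl⟩ := hdecomp x hs hx
    rcases hc.lt_or_gt with hneg | hpos
    · refine ⟨i, Or.inr ?_⟩
      have hx1 : c • (Pi.single i 1 : Fin n → ℝ) = (-c) • (-(Pi.single i 1 : Fin n → ℝ)) := by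
        rw [smul_neg, neg_smul, neg_neg]
      rw [hx1, Matrix.mulVec_smul, hhom _ (by linarith) _, ← smul_sub,
        enorm_smul', enorm_smul', enorm_neg', enorm_single, abs_of_pos (by linarith : (0:ℝ) < -c),
        mul_one, mul_div_cancel_left₀ _ (by linarith : (-c : ℝ) ≠ 0)]
    · refine ⟨i, Or.inl ?_⟩
      rw [Matrix.mulVec_smul, hhom _ hpos.le _, ← smul_sub,
        enorm_smul', enorm_smul', enorm_single, abs_of_pos hpos,
        mul_one, mul_div_cancel_left₀ _ hpos.ne']
  have hbdd : BddAbove S := by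
    have hsub : S ⊆ (Set.range rp) ∪ (Set.range rn) := by
      intro r hr
      obtain ⟨i, h | h⟩ := hval r hr
      · exact Or.inl ⟨i, h.symm⟩
      · exact Or.inr ⟨i, h.symm⟩
    exact (((Set.finite_range rp).union (Set.finite_range rn)).subset hsub).bddAbove
  -- the linear map
  set L := WithLp.linearEquiv 2 ℝ (Fin n → ℝ) with hL
  set G : (Fin m → ℝ) →ₗ[ℝ] EuclideanSpace ℝ (Fin n) :=
    L.symm.toLinearMap ∘ₗ Matrix.mulVecLin ((2⁻¹ : ℝ) • (W₂ * W₁)) with hG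
  set T : EuclideanSpace ℝ (Fin n) →ₗ[ℝ] EuclideanSpace ℝ (Fin n) :=
    G ∘ₗ (Matrix.mulVecLin A ∘ₗ L.toLinearMap) with hT
  have hrank : Module.finrank ℝ (LinearMap.range T) ≤ m := by
    have h1 : LinearMap.range T ≤ LinearMap.range G := LinearMap.range_comp_le_range _ _
    calc Module.finrank ℝ (LinearMap.range T) ≤ Module.finrank ℝ (LinearMap.range G) :=
        Submodule.finrank_mono h1
      _ ≤ Module.finrank ℝ (Fin m → ℝ) := G.finrank_range_le
      _ = m := Module.finrank_fin_fun ℝ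
  obtain ⟨i, hkey⟩ := key_frobenius hmn hn T hrank
  have hTeval : ∀ v : Fin n → ℝ, T (L.symm v) =
      L.symm ((2⁻¹ : ℝ) • (W₂ * W₁).mulVec (A.mulVec v)) := by
    intro v
    simp only [hT, hG, LinearMap.comp_apply, LinearEquiv.coe_coe,
      LinearEquiv.apply_symm_apply, Matrix.mulVecLin_apply, Matrix.smul_mulVec]
  set u : Fin n → ℝ := Pi.single i 1 with hu
  have hsingle : EuclideanSpace.single i (1:ℝ) = L.symm u := rfl
  have hnormE : ∀ v : Fin n → ℝ, ‖L.symm v‖ = _root_.enorm v := by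
    intro v
    rw [enorm_eq_norm]
    rfl
  have ht : (W₂ * W₁).mulVec (A.mulVec u) = f (A.mulVec u) - f (A.mulVec (-u)) := by
    rw [← hdiff (A.mulVec u), Matrix.mulVec_neg]
  have h1 : EuclideanSpace.single i (1:ℝ) - T (EuclideanSpace.single i 1)
      = L.symm (u - (2⁻¹ : ℝ) • (f (A.mulVec u) - f (A.mulVec (-u)))) := by
    rw [hsingle, hTeval u, ← map_sub, ht]
  have hlin : u - (2⁻¹:ℝ) • (f (A.mulVec u) - f (A.mulVec (-u)))
      = (2⁻¹:ℝ) • ((u - f (A.mulVec u)) + -(-u - f (A.mulVec (-u)))) := by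
    module
  have hchain : Real.sqrt (1 - (m:ℝ)/n) ≤ (2⁻¹:ℝ) * (rp i + rn i) := by
    calc Real.sqrt (1 - (m:ℝ)/n)
        ≤ ‖EuclideanSpace.single i (1:ℝ) - T (EuclideanSpace.single i 1)‖ := hkey
      _ = _root_.enorm (u - (2⁻¹:ℝ) • (f (A.mulVec u) - f (A.mulVec (-u)))) := by
          rw [h1, hnormE]
      _ = (2⁻¹:ℝ) * _root_.enorm ((u - f (A.mulVec u)) + -(-u - f (A.mulVec (-u)))) := by
          rw [hlin, enorm_smul']
          norm_num
      _ ≤ (2⁻¹:ℝ) * (_root_.enorm (u - f (A.mulVec u)) + _root_.enorm (-(-u - f (A.mulVec (-u))))) := by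
          have := enorm_add_le' (u - f (A.mulVec u)) (-(-u - f (A.mulVec (-u))))
          linarith
      _ = (2⁻¹:ℝ) * (rp i + rn i) := by rw [enorm_neg']
  have hle1 : rp i ≤ sSup S := le_csSup hbdd (hmem1 i)
  have hle2 : rn i ≤ sSup S := le_csSup hbdd (hmem2 i)
  linarith
end

section
/- For any matrix M ∈ ℝ^{n×ñ} of rank at most m and any X ∈ ℝ^{n×ñ}, ‖M − X‖_F² ≥ Σ_{k=m+1}^{min(n,ñ)} σ_k(X)², where σ_k(X) are the singular values of X in decreasing order. -/
open Matrix Finset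


lemma aux_sum_ite {p d : ℕ} (hd : d ≤ p) :
    ∑ i : Fin p, (if (i : ℕ) < d then (1:ℝ) else 0) = d := by
  rw [Fin.sum_univ_eq_sum_range (fun i => if i < d then (1:ℝ) else 0)]
  rw [Finset.sum_ite, Finset.sum_const_zero, add_zero, Finset.sum_const]
  have : Finset.filter (fun i => i < d) (Finset.range p) = Finset.range d := by
    ext i; simp; omega
  simp [this]

lemma aux_kyfan {p : ℕ} (d : ℕ) (hd : d ≤ p) (ν c : Fin p → ℝ)
    (hmono : Monotone ν) (hc0 : ∀ i, 0 ≤ c i) (hc1 : ∀ i, c i ≤ 1)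
    (hsum : ∑ i, c i = d) :
    ∑ i ∈ Finset.univ.filter (fun i : Fin p => (i : ℕ) < d), ν i ≤ ∑ i, ν i * c i := by
  rcases Nat.eq_zero_or_pos p with hp | hp
  · subst hp; simp
  set θ : ℝ := ν ⟨min d (p-1), by omega⟩ with hθ
  have key : 0 ≤ ∑ i : Fin p, (ν i - θ) * (c i - if (i:ℕ) < d then 1 else 0) := by
    apply Finset.sum_nonneg
    intro i _
    by_cases h : (i:ℕ) < d
    · simp only [h, if_pos]
      have h1 : ν i ≤ θ := hmono (show i ≤ (⟨min d (p-1), by omega⟩ : Fin p) by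
          rw [Fin.le_def]; simp; omega)
      have h2 := hc1 i
      nlinarith
    · simp only [h, if_neg, not_false_iff]
      apply mul_nonneg
      · have : θ ≤ ν i := hmono (show (⟨min d (p-1), by omega⟩ : Fin p) ≤ i by
          rw [Fin.le_def]; simp; omega)
        linarith
      · simpa using hc0 i
  have expand : ∑ i : Fin p, (ν i - θ) * (c i - if (i:ℕ) < d then 1 else 0)
      = ∑ i, ν i * c i - ∑ i : Fin p, ν i * (if (i:ℕ) < d then 1 else 0)
        - θ * (∑ i, c i) + θ * ∑ i : Fin p, (if (i:ℕ) < d then (1:ℝ) else 0) := by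
    simp only [sub_mul, mul_sub]
    rw [Finset.sum_sub_distrib, Finset.sum_sub_distrib, Finset.mul_sum, Finset.mul_sum]
    rw [Finset.sum_sub_distrib]
    ring
  have hite : ∑ i : Fin p, (if (i:ℕ) < d then (1:ℝ) else 0) = d := aux_sum_ite hd
  have hnuite : ∑ i : Fin p, ν i * (if (i:ℕ) < d then 1 else 0)
      = ∑ i ∈ Finset.univ.filter (fun i : Fin p => (i : ℕ) < d), ν i := by
    rw [Finset.sum_filter]; congr 1; ext i; by_cases h : (i:ℕ) < d <;> simp [h]
  rw [expand, hnuite, hsum, hite] at key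
  linarith

lemma trace_t_mul_self_nonneg {a b : ℕ} (C : Matrix (Fin a) (Fin b) ℝ) :
    0 ≤ Matrix.trace (Cᵀ * C) := by
  rw [Matrix.trace]
  apply Finset.sum_nonneg
  intro j _
  simp only [Matrix.diag_apply, Matrix.mul_apply, Matrix.transpose_apply]
  apply Finset.sum_nonneg
  intro i _
  exact mul_self_nonneg _

lemma trace_proj_le {a b d : ℕ} (C : Matrix (Fin a) (Fin b) ℝ)
    (Q : Matrix (Fin b) (Fin d) ℝ) (hQ : Qᵀ * Q = 1) :
    Matrix.trace ((C * Q)ᵀ * (C * Q)) ≤ Matrix.trace (Cᵀ * C) := by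
  set P : Matrix (Fin b) (Fin b) ℝ := 1 - Q * Qᵀ with hP
  have hPt : Pᵀ = P := by
    simp [hP, Matrix.transpose_sub, Matrix.transpose_mul]
  have hPP : P * P = P := by
    simp only [hP, Matrix.sub_mul, Matrix.mul_sub, Matrix.one_mul, Matrix.mul_one]
    rw [Matrix.mul_assoc, ← Matrix.mul_assoc Qᵀ Q Qᵀ, hQ, Matrix.one_mul]
    abel
  have key : Matrix.trace (Cᵀ * C) - Matrix.trace ((C * Q)ᵀ * (C * Q))
      = Matrix.trace ((C * P)ᵀ * (C * P)) := by
    rw [Matrix.transpose_mul, Matrix.transpose_mul]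
    rw [Matrix.mul_assoc Pᵀ Cᵀ (C * P), hPt]
    rw [Matrix.trace_mul_comm P (Cᵀ * (C * P))]
    rw [Matrix.mul_assoc, Matrix.mul_assoc, Matrix.mul_assoc]
    rw [hPP]
    rw [Matrix.trace_mul_comm Qᵀ (Cᵀ * (C * Q))]
    simp only [hP, Matrix.mul_sub, Matrix.mul_one]
    rw [Matrix.trace_sub]
    rw [Matrix.mul_assoc]
    ring_nf
    rw [Matrix.mul_assoc]
  have := trace_t_mul_self_nonneg (C * P)
  linarith

section
variable {n p : ℕ} (M : Matrix (Fin n) (Fin p) ℝ)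

noncomputable def kerD : ℕ := Module.finrank ℝ (LinearMap.ker (Matrix.toEuclideanLin M))

noncomputable def kerQ : Matrix (Fin p) (Fin (kerD M)) ℝ :=
  fun i j => ((stdOrthonormalBasis ℝ (LinearMap.ker (Matrix.toEuclideanLin M)) j :
    LinearMap.ker (Matrix.toEuclideanLin M)) : EuclideanSpace ℝ (Fin p)) i

lemma kerQ_orth : (kerQ M)ᵀ * (kerQ M) = 1 := by
  ext j j'
  have h := (stdOrthonormalBasis ℝ (LinearMap.ker (Matrix.toEuclideanLin M))).orthonormal
  rw [orthonormal_iff_ite] at h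
  have := h j j'
  rw [Submodule.coe_inner] at this
  rw [PiLp.inner_apply] at this
  simp only [RCLike.inner_apply, conj_trivial] at this
  simp only [Matrix.mul_apply, Matrix.transpose_apply, Matrix.one_apply, kerQ]
  rw [show ∑ i, ((stdOrthonormalBasis ℝ (LinearMap.ker (Matrix.toEuclideanLin M)) j :
      LinearMap.ker (Matrix.toEuclideanLin M)) : EuclideanSpace ℝ (Fin p)) i *
      ((stdOrthonormalBasis ℝ (LinearMap.ker (Matrix.toEuclideanLin M)) j' :
      LinearMap.ker (Matrix.toEuclideanLin M)) : EuclideanSpace ℝ (Fin p)) i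
      = if j = j' then 1 else 0 from by
        exact (Finset.sum_congr rfl fun _ _ => mul_comm _ _).trans this]

lemma kerQ_ker : M * (kerQ M) = 0 := by
  ext i j
  have hmem := (stdOrthonormalBasis ℝ (LinearMap.ker (Matrix.toEuclideanLin M)) j).2
  rw [LinearMap.mem_ker] at hmem
  have : M *ᵥ (fun k => kerQ M k j) = 0 := by
    have := congrArg (WithLp.equiv 2 (Fin n → ℝ)) hmem
    rw [WithLp.equiv_apply, Matrix.ofLp_toEuclideanLin_apply] at this
    simpa [kerQ] using this
  simp only [Matrix.mul_apply, Matrix.zero_apply]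
  have := congrFun this i
  simpa [Matrix.mulVec, dotProduct] using this

lemma kerD_le : kerD M ≤ p := by
  have := Submodule.finrank_le (LinearMap.ker (Matrix.toEuclideanLin M))
  simpa [kerD, finrank_euclideanSpace] using this

lemma kerD_ge : p ≤ M.rank + kerD M := by
  have h1 := LinearMap.finrank_range_add_finrank_ker (Matrix.toEuclideanLin M)
  have h2 : M.rank = Module.finrank ℝ (LinearMap.range (Matrix.toEuclideanLin M)) := by
    rw [Matrix.rank_eq_finrank_range_toLin M
      (PiLp.basisFun 2 ℝ (Fin n)) (PiLp.basisFun 2 ℝ (Fin p))]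
    rw [Matrix.toEuclideanLin_eq_toLin]
  rw [finrank_euclideanSpace] at h1
  simp only [Fintype.card_fin] at h1
  have h3 : kerD M = Module.finrank ℝ (LinearMap.ker (Matrix.toEuclideanLin M)) := rfl
  omega

end

section
variable {n p : ℕ} (X : Matrix (Fin n) (Fin p) ℝ)

noncomputable abbrev hAh : (Xᴴ * X).IsHermitian := Matrix.isHermitian_conjTranspose_mul_self X
noncomputable abbrev Umat : Matrix (Fin p) (Fin p) ℝ := ((hAh X).eigenvectorUnitary : Matrix (Fin p) (Fin p) ℝ)

lemma Ustar : star (Umat X) = (Umat X)ᵀ := by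
  rw [Matrix.star_eq_conjTranspose, Matrix.conjTranspose_eq_transpose_of_trivial]

lemma hU1 : (Umat X)ᵀ * (Umat X) = 1 := by
  rw [← Ustar]
  exact Unitary.coe_star_mul_self ((hAh X).eigenvectorUnitary)

lemma hU2 : (Umat X) * (Umat X)ᵀ = 1 := by
  rw [← Ustar]
  exact Unitary.coe_mul_star_self ((hAh X).eigenvectorUnitary)

lemma hdiag : (Umat X)ᵀ * (Xᴴ * X) * (Umat X) = Matrix.diagonal ((hAh X).eigenvalues) := by
  have := (hAh X).conjStarAlgAut_star_eigenvectorUnitary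
  rw [Unitary.conjStarAlgAut_star_apply] at this
  rw [Ustar] at this
  rw [this]
  congr 1

lemma eig_nonneg (i : Fin p) : 0 ≤ (hAh X).eigenvalues i := by
  have h := hdiag X
  have : Matrix.diagonal ((hAh X).eigenvalues) i i = (hAh X).eigenvalues i := by simp
  rw [← this, ← h]
  have hexp : (Umat X)ᵀ * (Xᴴ * X) * (Umat X) = (X * Umat X)ᵀ * (X * Umat X) := by
    rw [Matrix.conjTranspose_eq_transpose_of_trivial, Matrix.transpose_mul]
    rw [Matrix.mul_assoc, Matrix.mul_assoc, Matrix.mul_assoc]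
  rw [hexp]
  simp only [Matrix.mul_apply, Matrix.transpose_apply]
  exact Finset.sum_nonneg fun k _ => mul_self_nonneg _

end

lemma trace_diag_R {p d : ℕ} (μ : Fin p → ℝ) (R : Matrix (Fin p) (Fin d) ℝ) :
    Matrix.trace (Rᵀ * Matrix.diagonal μ * R) = ∑ i, μ i * ∑ j, (R i j)^2 := by
  rw [Matrix.trace]
  simp only [Matrix.diag_apply, Matrix.mul_apply, Matrix.transpose_apply,
    Matrix.diagonal_apply]
  rw [Finset.sum_comm]
  apply Finset.sum_congr rfl
  intro i _
  rw [Finset.mul_sum]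
  apply Finset.sum_congr rfl
  intro j _
  rw [show (∑ x : Fin p, R x j * if x = i then μ x else 0) = R i j * μ i from by
    rw [Finset.sum_eq_single i] <;> simp +contextual]
  ring

lemma sum_sq_R {p d : ℕ} (R : Matrix (Fin p) (Fin d) ℝ) (hR : Rᵀ * R = 1) :
    ∑ i, ∑ j, (R i j)^2 = d := by
  have h : Matrix.trace (Rᵀ * R) = (d : ℝ) := by rw [hR]; simp
  rw [← h, Matrix.trace]
  simp only [Matrix.diag_apply, Matrix.mul_apply, Matrix.transpose_apply]
  rw [Finset.sum_comm]
  simp [pow_two]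

lemma row_sq_le_one {p d : ℕ} (R : Matrix (Fin p) (Fin d) ℝ) (hR : Rᵀ * R = 1) (i : Fin p) :
    ∑ j, (R i j)^2 ≤ 1 := by
  set S : Matrix (Fin p) (Fin p) ℝ := R * Rᵀ with hSdef
  have hSt : Sᵀ = S := by simp [hSdef, Matrix.transpose_mul]
  have hSS : S * S = S := by
    rw [hSdef, Matrix.mul_assoc, ← Matrix.mul_assoc Rᵀ R Rᵀ, hR, Matrix.one_mul]
  have hone : (1 - S) * (1 - S)ᵀ = 1 - S := by
    rw [Matrix.transpose_sub, Matrix.transpose_one, hSt]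
    simp only [Matrix.sub_mul, Matrix.mul_sub, Matrix.one_mul, Matrix.mul_one, hSS]
    abel
  have hdiag : (0:ℝ) ≤ (1 - S) i i := by
    have h2 : (1 - S) i i = ((1 - S) * (1 - S)ᵀ : Matrix (Fin p) (Fin p) ℝ) i i := by rw [hone]
    rw [h2, Matrix.mul_apply]
    exact Finset.sum_nonneg fun k _ => by
      rw [Matrix.transpose_apply]; exact mul_self_nonneg _
  have hSii : S i i = ∑ j, (R i j)^2 := by
    simp [hSdef, Matrix.mul_apply, pow_two]
  have : (1 - S) i i = 1 - S i i := by simp [Matrix.sub_apply, Matrix.one_apply]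
  rw [this, hSii] at hdiag
  linarith

/-- Frobenius norm of a real matrix. -/
noncomputable def frobNorm {n p : ℕ} (M : Matrix (Fin n) (Fin p) ℝ) : ℝ :=
  Real.sqrt (∑ i, ∑ j, (M i j) ^ 2)

theorem stmt_12 (n p m : ℕ) (M X : Matrix (Fin n) (Fin p) ℝ)
    (hM : M.rank ≤ m) :
    ∑ k ∈ Finset.univ.filter (fun k : Fin p => m ≤ (k : ℕ) ∧ (k : ℕ) < min n p),
        (singularValues X k) ^ 2 ≤ (frobNorm (M - X)) ^ 2 := by
  classical
  set μ : Fin p → ℝ := (Matrix.isHermitian_conjTranspose_mul_self X).eigenvalues with hμ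
  set σ : Equiv.Perm (Fin p) := Tuple.sort μ with hσ
  set ν : Fin p → ℝ := fun i => μ (σ i) with hν
  have hνmono : Monotone ν := Tuple.monotone_sort μ
  have hνnonneg : ∀ i, 0 ≤ ν i := fun i => eig_nonneg X (σ i)
  set B : Matrix (Fin n) (Fin p) ℝ := M - X with hB
  set d : ℕ := kerD M with hdd
  set Q : Matrix (Fin p) (Fin d) ℝ := kerQ M with hQdef
  set U : Matrix (Fin p) (Fin p) ℝ := Umat X with hUdef
  set R : Matrix (Fin p) (Fin d) ℝ := Uᵀ * Q with hRdef
  -- frobNorm squared = trace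
  have hfrob : (frobNorm B) ^ 2 = Matrix.trace (Bᵀ * B) := by
    rw [frobNorm, Real.sq_sqrt (Finset.sum_nonneg fun i _ =>
      Finset.sum_nonneg fun j _ => sq_nonneg (B i j))]
    rw [Matrix.trace]
    simp only [Matrix.diag_apply, Matrix.mul_apply, Matrix.transpose_apply]
    rw [Finset.sum_comm]
    simp [pow_two]
  -- B*Q = -(X*Q)
  have hBQ : B * Q = -(X * Q) := by
    rw [hB, Matrix.sub_mul, kerQ_ker M, zero_sub]
  -- trace ((X*Q)ᵀ (X*Q)) ≤ trace (BᵀB)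
  have htr1 : Matrix.trace ((X * Q)ᵀ * (X * Q)) ≤ Matrix.trace (Bᵀ * B) := by
    have h := trace_proj_le B Q (kerQ_orth M)
    rw [hBQ] at h
    simpa using h
  -- R is orthonormal-columned
  have hR : Rᵀ * R = 1 := by
    rw [hRdef, Matrix.transpose_mul, Matrix.transpose_transpose,
      Matrix.mul_assoc, ← Matrix.mul_assoc U Uᵀ Q, hU2 X, Matrix.one_mul, kerQ_orth M]
  -- trace ((X*Q)ᵀ (X*Q)) = trace (Rᵀ D R)
  have hAspec : Xᴴ * X = U * Matrix.diagonal μ * Uᵀ := by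
    have h := hdiag X
    calc Xᴴ * X = (U * Uᵀ) * (Xᴴ * X) * (U * Uᵀ) := by rw [hU2 X]; simp [Matrix.mul_assoc]
    _ = U * ((Uᵀ * (Xᴴ * X)) * U) * Uᵀ := by simp only [Matrix.mul_assoc]
    _ = U * Matrix.diagonal μ * Uᵀ := by
        have h' : Uᵀ * (Xᴴ * X) * U = Matrix.diagonal μ := h
        rw [h']
  have htr2 : Matrix.trace ((X * Q)ᵀ * (X * Q)) = Matrix.trace (Rᵀ * Matrix.diagonal μ * R) := by
    have hXQ : (X * Q)ᵀ * (X * Q) = Qᵀ * (Xᴴ * X) * Q := by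
      rw [Matrix.transpose_mul, Matrix.conjTranspose_eq_transpose_of_trivial]
      simp only [Matrix.mul_assoc]
    rw [hXQ, hAspec, hRdef]
    simp only [Matrix.transpose_mul, Matrix.transpose_transpose, Matrix.mul_assoc]
  -- trace (Rᵀ D R) = ∑ μ i * c i
  set c : Fin p → ℝ := fun i => ∑ j, (R i j)^2 with hc
  have htr3 : Matrix.trace (Rᵀ * Matrix.diagonal μ * R) = ∑ i, μ i * c i :=
    trace_diag_R μ R
  have hc0 : ∀ i, 0 ≤ c i := fun i => Finset.sum_nonneg fun j _ => sq_nonneg _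
  have hc1 : ∀ i, c i ≤ 1 := fun i => row_sq_le_one R hR i
  have hcsum : ∑ i, c i = (d : ℝ) := sum_sq_R R hR
  -- reindex by σ
  have hreidx : ∑ i, μ i * c i = ∑ i, ν i * (c (σ i)) := (Equiv.sum_comp σ (fun i => μ i * c i)).symm
  have hcsum' : ∑ i, c (σ i) = (d : ℝ) := by rw [Equiv.sum_comp σ c]; exact hcsum
  -- Ky Fan
  have hkf : ∑ i ∈ Finset.univ.filter (fun i : Fin p => (i : ℕ) < d), ν i ≤ ∑ i, ν i * (c (σ i)) :=
    aux_kyfan d (kerD_le M) ν (fun i => c (σ i)) hνmono (fun i => hc0 (σ i))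
      (fun i => hc1 (σ i)) hcsum'
  -- LHS rewriting
  have hLHS : ∑ k ∈ Finset.univ.filter (fun k : Fin p => m ≤ (k : ℕ) ∧ (k : ℕ) < min n p),
      (singularValues X k) ^ 2
      = ∑ i ∈ Finset.univ.filter (fun i : Fin p => m ≤ ((Fin.rev i) : ℕ) ∧ ((Fin.rev i) : ℕ) < min n p), ν i := by
    rw [Finset.sum_congr rfl (fun k _ => show (singularValues X k)^2 = ν k.rev from by
      rw [singularValues, Real.sq_sqrt (eig_nonneg X _)])]
    apply Finset.sum_equiv (Fin.revPerm)
    · intro i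
      simp only [Finset.mem_filter, Finset.mem_univ, true_and, Fin.revPerm_apply, Fin.rev_rev]
    · intro i _; rfl
  -- subset bound
  have hsubset : Finset.univ.filter (fun i : Fin p => m ≤ ((Fin.rev i) : ℕ) ∧ ((Fin.rev i) : ℕ) < min n p)
      ⊆ Finset.univ.filter (fun i : Fin p => (i : ℕ) < d) := by
    intro i hi
    simp only [Finset.mem_filter, Finset.mem_univ, true_and, Fin.val_rev] at hi ⊢
    have h1 := kerD_ge M
    have h2 := i.isLt
    omega
  have hmono2 : ∑ i ∈ Finset.univ.filter (fun i : Fin p => m ≤ ((Fin.rev i) : ℕ) ∧ ((Fin.rev i) : ℕ) < min n p), ν i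
      ≤ ∑ i ∈ Finset.univ.filter (fun i : Fin p => (i : ℕ) < d), ν i :=
    Finset.sum_le_sum_of_subset_of_nonneg hsubset (fun i _ _ => hνnonneg i)
  rw [hLHS, hfrob]
  calc ∑ i ∈ Finset.univ.filter (fun i : Fin p => m ≤ ((Fin.rev i) : ℕ) ∧ ((Fin.rev i) : ℕ) < min n p), ν i
      ≤ ∑ i ∈ Finset.univ.filter (fun i : Fin p => (i : ℕ) < d), ν i := hmono2
    _ ≤ ∑ i, ν i * (c (σ i)) := hkf
    _ = ∑ i, μ i * c i := hreidx.symm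
    _ = Matrix.trace (Rᵀ * Matrix.diagonal μ * R) := htr3.symm
    _ = Matrix.trace ((X * Q)ᵀ * (X * Q)) := htr2.symm
    _ ≤ Matrix.trace (Bᵀ * B) := htr1
end

section
/- Suppose the matrix A ∈ ℝ^{m×n} admits only sign-ambiguous phase retrieval solutions: |Ax| = |Ax'| with x, x' ∈ ℝⁿ \ {0} implies x' = x or x' = −x, and n ≥ 2. Then there is no continuous function f: ℝᵐ → ℝⁿ such that f(|Ax|) ∈ {x, −x} for all x ∈ ℝⁿ. -/
theorem stmt_15 (m n : ℕ) (hn : 2 ≤ n) (A : Matrix (Fin m) (Fin n) ℝ)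
    (habs : ∀ x x' : Fin n → ℝ, x ≠ 0 → x' ≠ 0 →
      (fun i => |A.mulVec x i|) = (fun i => |A.mulVec x' i|) → x' = x ∨ x' = -x) :
    ¬ ∃ f : (Fin m → ℝ) → (Fin n → ℝ), Continuous f ∧
      ∀ x : Fin n → ℝ,
        f (fun i => |A.mulVec x i|) = x ∨ f (fun i => |A.mulVec x i|) = -x := by
  rintro ⟨f, hf, hfx⟩
  set i0 : Fin n := ⟨0, by omega⟩ with hi0
  set i1 : Fin n := ⟨1, by omega⟩ with hi1
  have hi01 : i1 ≠ i0 := by simp [hi0, hi1, Fin.ext_iff]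
  set e0 : Fin n → ℝ := Pi.single i0 1 with he0
  set e1 : Fin n → ℝ := Pi.single i1 1 with he1
  set c : ℝ → (Fin n → ℝ) := fun t => Real.cos t • e0 + Real.sin t • e1 with hc
  have hc0 : ∀ t, c t i0 = Real.cos t := by
    intro t; simp [hc, he0, he1, Pi.single_apply, hi01]
  have hc1 : ∀ t, c t i1 = Real.sin t := by
    intro t; simp [hc, he0, he1, Pi.single_apply, hi01]
  set g : ℝ → (Fin m → ℝ) := fun t => (fun i => |A.mulVec (c t) i|) with hg
  set φ : ℝ → ℝ := fun t => f (g t) i0 * Real.cos t + f (g t) i1 * Real.sin t with hφ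
  have hval : ∀ t, φ t = 1 ∨ φ t = -1 := by
    intro t
    rcases hfx (c t) with h | h
    · left
      simp only [hφ, hg, h, hc0 t, hc1 t]
      nlinarith [Real.sin_sq_add_cos_sq t]
    · right
      simp only [hφ, hg, h, Pi.neg_apply, hc0 t, hc1 t]
      nlinarith [Real.sin_sq_add_cos_sq t]
  have hcont_c : Continuous c := by
    apply Continuous.add
    · exact Real.continuous_cos.smul continuous_const
    · exact Real.continuous_sin.smul continuous_const
  have h1 : Continuous fun t => A.mulVec (c t) := by
    have := (A.mulVecLin.continuous_of_finiteDimensional).comp hcont_c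
    exact this
  have hcont_g : Continuous g :=
    continuous_pi fun i => continuous_abs.comp ((continuous_apply i).comp h1)
  have hcont_φ : Continuous φ := by
    apply Continuous.add
    · exact ((continuous_apply i0).comp (hf.comp hcont_g)).mul Real.continuous_cos
    · exact ((continuous_apply i1).comp (hf.comp hcont_g)).mul Real.continuous_sin
  have hgπ : g Real.pi = g 0 := by
    have hcπ : c Real.pi = -(c 0) := by
      funext i
      simp [hc, he0, he1, Real.cos_pi, Real.sin_pi]
    funext i
    simp [hg, hcπ, Matrix.mulVec_neg, abs_neg]
  have hφ0 : φ 0 = f (g 0) i0 := by simp [hφ]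
  have hφπ : φ Real.pi = -φ 0 := by simp [hφ, hgπ, hφ0, Real.cos_pi, Real.sin_pi]
  have hmem : (0 : ℝ) ∈ Set.uIcc (φ 0) (φ Real.pi) := by
    rcases hval 0 with h | h <;>
      · rw [Set.mem_uIcc]; rw [hφπ, h]; norm_num
  obtain ⟨t, _, ht⟩ := intermediate_value_uIcc hcont_φ.continuousOn hmem
  rcases hval t with h | h <;> rw [ht] at h <;> norm_num at h
end

section
/- Let U ⊆ ℝⁿ be positively homogeneous, ‖·‖_II a norm on ℝⁿ with ‖x‖₂ ≤ ‖x‖_II for all x, and g: ℝⁿ → ℝᵐ positive homogeneous with lower bound ‖g(x₁) − g(x₂)‖₂ ≥ τ‖x₁ − x₂‖₂ on U (τ > 0) and upper bound ‖g(x₁) − g(x₂)‖₂ ≤ ρ‖x₁ − x₂‖_II on ℝⁿ. Let f: ℝᵐ → ℝⁿ be any (2/τ)-Lipschitz extension of the inverse of g on g(U). Then for all x ∈ ℝⁿ and e ∈ ℝᵐ: ‖f(g(x) + e) − x‖₂ ≤ (1 + 2ρ/τ)·d_II(x, U) + (2/τ)‖e‖₂, where d_II(x, U) = inf over x' ∈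 U of ‖x − x'‖_II. -/
theorem stmt_16 (n m : ℕ)
    (U : Set (EuclideanSpace ℝ (Fin n))) (hUne : U.Nonempty)
    (hUhom : ∀ l : ℝ, 0 ≤ l → ∀ u ∈ U, l • u ∈ U)
    (N : EuclideanSpace ℝ (Fin n) → ℝ)
    (hN0 : ∀ x, N x = 0 ↔ x = 0)
    (hNadd : ∀ x y, N (x + y) ≤ N x + N y)
    (hNsmul : ∀ (c : ℝ) x, N (c • x) = |c| * N x)
    (hNge : ∀ x, ‖x‖ ≤ N x)
    (g : EuclideanSpace ℝ (Fin n) → EuclideanSpace ℝ (Fin m))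
    (hghom : ∀ l : ℝ, 0 ≤ l → ∀ x, g (l • x) = l • g x)
    (τ ρ : ℝ) (hτ : 0 < τ)
    (hlow : ∀ x₁ ∈ U, ∀ x₂ ∈ U, τ * ‖x₁ - x₂‖ ≤ ‖g x₁ - g x₂‖)
    (hup : ∀ x₁ x₂, ‖g x₁ - g x₂‖ ≤ ρ * N (x₁ - x₂))
    (f : EuclideanSpace ℝ (Fin m) → EuclideanSpace ℝ (Fin n))
    (hfinv : ∀ x ∈ U, f (g x) = x)
    (hflip : ∀ y₁ y₂, ‖f y₁ - f y₂‖ ≤ (2 / τ) * ‖y₁ - y₂‖) :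
    ∀ (x : EuclideanSpace ℝ (Fin n)) (e : EuclideanSpace ℝ (Fin m)),
      ‖f (g x + e) - x‖ ≤
        (1 + 2 * ρ / τ) * sInf {r : ℝ | ∃ x' ∈ U, r = N (x - x')} +
          (2 / τ) * ‖e‖ := by
  intro x e
  have htpos : (0:ℝ) ≤ 2 / τ := by positivity
  have hNnn : ∀ z, 0 ≤ N z := fun z => le_trans (norm_nonneg z) (hNge z)
  set c : ℝ := 1 + 2 * ρ / τ with hc
  set d : ℝ := (2 / τ) * ‖e‖ with hd
  set S : Set ℝ := {r : ℝ | ∃ x' ∈ U, r = N (x - x')} with hS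
  -- key estimate
  have key : ∀ x' ∈ U, ‖f (g x + e) - x‖ ≤ c * N (x - x') + d := by
    intro x' hx'
    have h1 : ‖f (g x + e) - x‖ ≤ ‖f (g x + e) - f (g x')‖ + ‖x' - x‖ := by
      calc ‖f (g x + e) - x‖ = ‖(f (g x + e) - f (g x')) + (f (g x') - x)‖ := by
            rw [sub_add_sub_cancel]
        _ ≤ ‖f (g x + e) - f (g x')‖ + ‖f (g x') - x‖ := norm_add_le _ _
        _ = ‖f (g x + e) - f (g x')‖ + ‖x' - x‖ := by rw [hfinv x' hx']
    have h2 : ‖f (g x + e) - f (g x')‖ ≤ (2 / τ) * (‖g x - g x'‖ + ‖e‖) := by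
      calc ‖f (g x + e) - f (g x')‖ ≤ (2 / τ) * ‖g x + e - g x'‖ := hflip _ _
        _ ≤ (2 / τ) * (‖g x - g x'‖ + ‖e‖) := by
            apply mul_le_mul_of_nonneg_left _ htpos
            have : g x + e - g x' = (g x - g x') + e := by abel
            rw [this]; exact norm_add_le _ _
    have h3 : ‖g x - g x'‖ ≤ ρ * N (x - x') := hup x x'
    have h4 : ‖x' - x‖ ≤ N (x - x') := by
      rw [norm_sub_rev]; exact hNge _
    calc ‖f (g x + e) - x‖ ≤ (2 / τ) * (‖g x - g x'‖ + ‖e‖) + ‖x' - x‖ := by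
          linarith
      _ ≤ (2 / τ) * (ρ * N (x - x') + ‖e‖) + N (x - x') := by
          have := mul_le_mul_of_nonneg_left (add_le_add_right h3 ‖e‖) htpos
          linarith
      _ = c * N (x - x') + d := by rw [hc, hd]; ring
  have hSne : S.Nonempty := by
    obtain ⟨u, hu⟩ := hUne
    exact ⟨N (x - u), u, hu, rfl⟩
  have hSbdd : ∀ r ∈ S, 0 ≤ r := by
    rintro r ⟨x', _, rfl⟩; exact hNnn _
  have hSbdd' : BddBelow S := ⟨0, fun r hr => hSbdd r hr⟩
  rcases lt_or_ge ρ 0 with hρ | hρ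
  · -- ρ < 0 : every element of S is zero, and x ∈ U
    have hall : ∀ r ∈ S, r = 0 := by
      rintro r ⟨x', hx', rfl⟩
      by_contra h
      have hpos : 0 < N (x - x') := lt_of_le_of_ne (hNnn _) (Ne.symm h)
      have := hup x x'
      nlinarith [norm_nonneg (g x - g x')]
    have hinf : sInf S = 0 := by
      have : S = {0} := Set.eq_singleton_iff_nonempty_unique_mem.2 ⟨hSne, hall⟩
      rw [this, csInf_singleton]
    rw [hinf, mul_zero, zero_add]
    obtain ⟨u, hu⟩ := hUne
    have hNz : N (x - u) = 0 := hall _ ⟨u, hu, rfl⟩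
    have hxu : x = u := sub_eq_zero.1 ((hN0 (x - u)).1 hNz)
    have hxU : x ∈ U := hxu ▸ hu
    have : f (g x + e) - x = f (g x + e) - f (g x) := by rw [hfinv x hxU]
    rw [this]
    calc ‖f (g x + e) - f (g x)‖ ≤ (2 / τ) * ‖g x + e - g x‖ := hflip _ _
      _ = (2 / τ) * ‖e‖ := by rw [add_sub_cancel_left]
  · -- ρ ≥ 0, so c ≥ 0
    have hcnn : 0 ≤ c := by rw [hc]; positivity
    rcases eq_or_lt_of_le hcnn with hc0 | hcpos
    · obtain ⟨u, hu⟩ := hUne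
      have := key u hu
      have hsinf : 0 ≤ sInf S := le_csInf hSne hSbdd
      simp only [← hc0, zero_mul] at this ⊢
      linarith
    · have h1 : (‖f (g x + e) - x‖ - d) / c ≤ sInf S := by
        apply le_csInf hSne
        rintro r ⟨x', hx', rfl⟩
        rw [div_le_iff₀ hcpos]
        have := key x' hx'
        linarith [mul_comm c (N (x - x'))]
      have := mul_le_mul_of_nonneg_left h1 (le_of_lt hcpos)
      rw [mul_div_cancel₀ _ (ne_of_gt hcpos)] at this
      linarith
end
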